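/- Define, for positive reals G_sr, G_su, G_sul, G_rul with Δ = G_sr − G_su and Σ = G_sul + G_rul: G_new = G_sr·Σ/(Δ+Σ) if min{G_sr, Σ} > G_su, else G_new = min{G_sr, G_su}; and G_old = G_sr·G_rul/(Δ+G_rul) if min{G_sr, G_rul} > G_su, else G_old = min{G_sr, G_su}. Then G_new ≥ G_old always holds. -/
import Mathlib

theorem Gnew_ge_Gold
    (Gsr Gsu Gsul Grul : ℝ)
    (hGsr : 0 < Gsr) (hGsu : 0 < Gsu) (hGsul : 0 < Gsul) (hGrul : 0 < Grul) :
    (if Gsu < min Gsr (Gsul + Grul) then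
        Gsr * (Gsul + Grul) / ((Gsr - Gsu) + (Gsul + Grul))
      else min Gsr Gsu) ≥
    (if Gsu < min Gsr Grul then
        Gsr * Grul / ((Gsr - Gsu) + Grul)
      else min Gsr Gsu) := by
  have hS : Grul ≤ Gsul + Grul := by linarith
  rcases lt_or_ge Gsu (min Gsr (Gsul + Grul)) with hnew | hnew
  · rw [if_pos hnew]
    have h1 : Gsu < Gsr := lt_of_lt_of_le hnew (min_le_left _ _)
    have h2 : Gsu < Gsul + Grul := lt_of_lt_of_le hnew (min_le_right _ _)
    have hden : 0 < (Gsr - Gsu) + (Gsul + Grul) := by linarith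
    rcases lt_or_ge Gsu (min Gsr Grul) with hold | hold
    · rw [if_pos hold]
      have h3 : Gsu < Grul := lt_of_lt_of_le hold (min_le_right _ _)
      have hden2 : 0 < (Gsr - Gsu) + Grul := by linarith
      rw [ge_iff_le, div_le_div_iff₀ hden2 hden]
      nlinarith [mul_nonneg (mul_pos hGsr hGsul).le (sub_pos.mpr h1).le]
    · rw [if_neg (not_lt.mpr hold)]
      rw [min_eq_right h1.le, ge_iff_le, le_div_iff₀ hden]
      nlinarith
  · rw [if_neg (not_lt.mpr hnew)]
    have hold : ¬ Gsu < min Gsr Grul := fun h =>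
      absurd (lt_of_lt_of_le h (min_le_min le_rfl hS)) (not_lt.mpr hnew)
    rw [if_neg hold]
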